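/- arXiv:2405.18177 — 2 statements merged into one kernel-verified Lean document; each statement's English description precedes it below -/
import Mathlib

section
/- The cocktail party graph CP(n) with n = 2p vertices is resistance regular; in fact every diagonal entry of the Moore-Penrose inverse of its Laplacian equals (n²(2p−3) + 4(n−1) − 2p(n−2)) / (2n²(n−2)(p−1)). -/
open Matrix BigOperators Finset

noncomputable def allOnes (V : Type*) : Matrix V V ℝ := Matrix.of fun _ _ => 1

/-- The resistance distance matrix of a connected graph, via the matrix
`X = (L + (1/n)J)⁻¹`: `r_ij = X_ii + X_jj - 2X_ij`. -/
noncomputable def resistMatrix {V : Type*} [Fintype V] [DecidableEq V]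
    (G : SimpleGraph V) [DecidableRel G.Adj] : Matrix V V ℝ :=
  Matrix.of fun i j =>
    (G.lapMatrix ℝ + (Fintype.card V : ℝ)⁻¹ • allOnes V)⁻¹ i i +
    (G.lapMatrix ℝ + (Fintype.card V : ℝ)⁻¹ • allOnes V)⁻¹ j j -
    2 * (G.lapMatrix ℝ + (Fintype.card V : ℝ)⁻¹ • allOnes V)⁻¹ i j

/-- `W` is the Moore-Penrose inverse of `L`. -/
def IsMoorePenrose {V : Type*} [Fintype V] [DecidableEq V] (L W : Matrix V V ℝ) : Prop :=
  L * W * L = L ∧ W * L * W = W ∧ (L * W)ᵀ = L * W ∧ (W * L)ᵀ = W * L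

/-- The cocktail party graph `CP(2p)`: `K_{2p}` minus a perfect matching. -/
def cocktailParty (p : ℕ) : SimpleGraph (Fin p × Fin 2) where
  Adj v w := v.1 ≠ w.1
  symm := ⟨fun _ _ h => h.symm⟩
  loopless := ⟨fun _ h => h rfl⟩

instance (p : ℕ) : DecidableRel (cocktailParty p).Adj :=
  fun v w => inferInstanceAs (Decidable (v.1 ≠ w.1))

/-! The Laplacian of `CP(2p)` is `2p • E + (2p - 2) • F` for the orthogonal projections `E` onto
the vectors that are constant on each matched pair and sum to zero, and `F` onto the vectors that
are antisymmetric on each pair. Hence its Moore-Penrose inverse is `(2p)⁻¹ • E + (2p - 2)⁻¹ • F`,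
whose diagonal is constant and whose row sums vanish; these two facts make all row sums of the
resistance matrix equal. -/

namespace IsMoorePenrose

variable {V : Type*} [Fintype V] [DecidableEq V] {L W W' : Matrix V V ℝ}

theorem mul_eq_mul_left (h : IsMoorePenrose L W) (h' : IsMoorePenrose L W') : L * W = L * W' := by
  obtain ⟨h1, -, h3, -⟩ := h
  obtain ⟨h1', -, h3', -⟩ := h'
  calc L * W = (L * W' * L * W)ᵀ := by rw [h1', h3]
    _ = (L * W)ᵀ * (L * W')ᵀ := by simp only [transpose_mul, mul_assoc]
    _ = L * W' := by rw [h3, h3', ← mul_assoc, h1]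

theorem mul_eq_mul_right (h : IsMoorePenrose L W) (h' : IsMoorePenrose L W') : W * L = W' * L := by
  obtain ⟨h1, -, -, h4⟩ := h
  obtain ⟨h1', -, -, h4'⟩ := h'
  calc W * L = (W * L * W' * L)ᵀ := by
        rw [mul_assoc (W * L), mul_assoc W, ← mul_assoc L, h1', h4]
    _ = (W' * L)ᵀ * (W * L)ᵀ := by simp only [transpose_mul, mul_assoc]
    _ = W' * L := by rw [h4, h4', mul_assoc, ← mul_assoc L, h1]

theorem unique (h : IsMoorePenrose L W) (h' : IsMoorePenrose L W') : W = W' :=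
  calc W = W * L * W := h.2.1.symm
    _ = W' * L * W' := by rw [h.mul_eq_mul_right h', mul_assoc, h.mul_eq_mul_left h', ← mul_assoc]
    _ = W' := h'.2.1

end IsMoorePenrose

section SpectralPair

variable {V : Type*} [Fintype V] [DecidableEq V] {E F : Matrix V V ℝ}

theorem smul_add_smul_mul_smul_add_smul (hE : IsIdempotentElem E) (hF : IsIdempotentElem F)
    (hEF : E * F = 0) (hFE : F * E = 0) (a b c d : ℝ) :
    (a • E + b • F) * (c • E + d • F) = (a * c) • E + (b * d) • F := by
  simp only [add_mul, mul_add, Matrix.smul_mul, Matrix.mul_smul, hE.eq, hF.eq, hEF, hFE,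
    smul_zero, add_zero, zero_add, smul_smul, mul_comm c a, mul_comm d b]

theorem isMoorePenrose_smul_add_smul (hE : IsIdempotentElem E) (hF : IsIdempotentElem F)
    (hEF : E * F = 0) (hEt : Eᵀ = E) (hFt : Fᵀ = F) (a b : ℝ) :
    IsMoorePenrose (a • E + b • F) (a⁻¹ • E + b⁻¹ • F) := by
  have hFE : F * E = 0 := by rw [← hEt, ← hFt, ← transpose_mul, hEF, transpose_zero]
  have hmul := smul_add_smul_mul_smul_add_smul hE hF hEF hFE
  have htr : ∀ c d : ℝ, (c • E + d • F)ᵀ = c • E + d • F := fun c d => by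
    rw [transpose_add, transpose_smul, transpose_smul, hEt, hFt]
  refine ⟨?_, ?_, ?_, ?_⟩
  · rw [hmul, hmul, mul_inv_mul_cancel, mul_inv_mul_cancel]
  · rw [hmul, hmul]
    nth_rw 2 [← inv_inv a, ← inv_inv b]
    rw [mul_inv_mul_cancel, mul_inv_mul_cancel]
  · rw [hmul, htr]
  · rw [hmul, htr]

end SpectralPair

section AllOnes

@[simp]
theorem allOnes_apply {V : Type*} (i j : V) : allOnes V i j = 1 := rfl

@[simp]
theorem transpose_allOnes (V : Type*) : (allOnes V)ᵀ = allOnes V := rfl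

variable {V : Type*} [Fintype V]

theorem allOnes_mul_allOnes : allOnes V * allOnes V = (Fintype.card V : ℝ) • allOnes V := by
  ext i j
  simp [mul_apply]

theorem sum_resistance_eq_of_diag_eq (W : Matrix V V ℝ) {d : ℝ} (hdiag : ∀ i, W i i = d)
    (hrow : W * allOnes V = 0) (i : V) :
    ∑ k, (W i i + W k k - 2 * W i k) = 2 * Fintype.card V * d := by
  have hrow_i : ∑ k, W i k = 0 := by simpa [mul_apply] using congrFun₂ hrow i i
  rw [sum_sub_distrib, sum_add_distrib, ← mul_sum, hrow_i]
  simp [hdiag]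
  ring

end AllOnes

namespace CocktailParty

variable (p : ℕ)

noncomputable def pairOnes : Matrix (Fin p × Fin 2) (Fin p × Fin 2) ℝ :=
  Matrix.of fun i j => if i.1 = j.1 then 1 else 0

theorem pairOnes_mul_pairOnes : pairOnes p * pairOnes p = (2 : ℝ) • pairOnes p := by
  ext i j
  simp [pairOnes, mul_apply, Fintype.sum_prod_type]
  split_ifs <;> norm_num

theorem allOnes_mul_pairOnes : allOnes _ * pairOnes p = (2 : ℝ) • allOnes _ := by
  ext i j
  simp only [pairOnes, mul_apply, Fintype.sum_prod_type, Fin.sum_univ_two, of_apply,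
    allOnes_apply]
  simp [sum_add_distrib]
  norm_num

theorem pairOnes_mul_allOnes : pairOnes p * allOnes _ = (2 : ℝ) • allOnes _ := by
  ext i j
  simp only [pairOnes, mul_apply, Fintype.sum_prod_type, Fin.sum_univ_two, of_apply,
    allOnes_apply]
  simp [sum_add_distrib]
  norm_num

theorem transpose_pairOnes : (pairOnes p)ᵀ = pairOnes p := by
  ext i j
  simp [pairOnes, eq_comm]

theorem adjMatrix_cocktailParty : (cocktailParty p).adjMatrix ℝ = allOnes _ - pairOnes p := by
  ext i j
  rw [SimpleGraph.adjMatrix_apply]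
  by_cases h : i.1 = j.1 <;> simp [pairOnes, cocktailParty, h]

theorem degree_cocktailParty (v : Fin p × Fin 2) :
    ((cocktailParty p).degree v : ℝ) = 2 * p - 2 := by
  have hrow : (cocktailParty p).adjMatrix ℝ * allOnes _ = (2 * (p : ℝ) - 2) • allOnes _ := by
    rw [adjMatrix_cocktailParty, sub_mul, allOnes_mul_allOnes, pairOnes_mul_allOnes]
    simp only [Fintype.card_prod, Fintype.card_fin, Nat.cast_mul, Nat.cast_ofNat]
    module
  simpa [mul_apply, SimpleGraph.degree_eq_sum_if_adj] using congrFun₂ hrow v v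

theorem lapMatrix_cocktailParty :
    (cocktailParty p).lapMatrix ℝ = (2 * (p : ℝ) - 2) • 1 - allOnes _ + pairOnes p := by
  rw [SimpleGraph.lapMatrix, SimpleGraph.degMatrix, adjMatrix_cocktailParty]
  ext i j
  by_cases h : i = j
  · subst h
    simp [degree_cocktailParty, pairOnes]
  · simp [diagonal_apply_ne _ h, one_apply_ne h]
    ring

noncomputable def pairConstProj : Matrix (Fin p × Fin 2) (Fin p × Fin 2) ℝ :=
  (2 : ℝ)⁻¹ • pairOnes p - (2 * (p : ℝ))⁻¹ • allOnes _

noncomputable def pairAntisymProj : Matrix (Fin p × Fin 2) (Fin p × Fin 2) ℝ :=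
  1 - (2 : ℝ)⁻¹ • pairOnes p

noncomputable def lapPinv : Matrix (Fin p × Fin 2) (Fin p × Fin 2) ℝ :=
  (2 * (p : ℝ))⁻¹ • pairConstProj p + (2 * (p : ℝ) - 2)⁻¹ • pairAntisymProj p

variable {p}

theorem isIdempotentElem_pairConstProj (hp : p ≠ 0) : IsIdempotentElem (pairConstProj p) := by
  have hp' : (p : ℝ) ≠ 0 := Nat.cast_ne_zero.mpr hp
  simp only [IsIdempotentElem, pairConstProj, sub_mul, mul_sub, Matrix.smul_mul, Matrix.mul_smul,
    pairOnes_mul_pairOnes, allOnes_mul_pairOnes, pairOnes_mul_allOnes, allOnes_mul_allOnes,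
    Fintype.card_prod, Fintype.card_fin, smul_smul]
  match_scalars <;> field_simp
  ring

theorem isIdempotentElem_pairAntisymProj : IsIdempotentElem (pairAntisymProj p) := by
  simp only [IsIdempotentElem, pairAntisymProj, sub_mul, mul_sub, Matrix.smul_mul,
    Matrix.mul_smul, pairOnes_mul_pairOnes, smul_smul, one_mul, mul_one]
  module

theorem pairConstProj_mul_pairAntisymProj : pairConstProj p * pairAntisymProj p = 0 := by
  simp only [pairConstProj, pairAntisymProj, sub_mul, mul_sub, Matrix.smul_mul, Matrix.mul_smul,
    pairOnes_mul_pairOnes, allOnes_mul_pairOnes, smul_smul, mul_one]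
  module

theorem transpose_pairConstProj : (pairConstProj p)ᵀ = pairConstProj p := by
  rw [pairConstProj, transpose_sub, transpose_smul, transpose_smul, transpose_pairOnes,
    transpose_allOnes]

theorem transpose_pairAntisymProj : (pairAntisymProj p)ᵀ = pairAntisymProj p := by
  rw [pairAntisymProj, transpose_sub, transpose_smul, transpose_pairOnes, transpose_one]

theorem lapMatrix_cocktailParty_eq_smul_add_smul (hp : p ≠ 0) :
    (cocktailParty p).lapMatrix ℝ =
      (2 * (p : ℝ)) • pairConstProj p + (2 * (p : ℝ) - 2) • pairAntisymProj p := by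
  have hp' : (p : ℝ) ≠ 0 := Nat.cast_ne_zero.mpr hp
  rw [lapMatrix_cocktailParty, pairConstProj, pairAntisymProj, smul_sub, smul_sub, smul_smul,
    smul_smul, mul_inv_cancel₀ (by positivity), one_smul]
  module

theorem isMoorePenrose_lapPinv (hp : p ≠ 0) :
    IsMoorePenrose ((cocktailParty p).lapMatrix ℝ) (lapPinv p) := by
  rw [lapMatrix_cocktailParty_eq_smul_add_smul hp]
  exact isMoorePenrose_smul_add_smul (isIdempotentElem_pairConstProj hp)
    isIdempotentElem_pairAntisymProj pairConstProj_mul_pairAntisymProj transpose_pairConstProj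
    transpose_pairAntisymProj _ _

theorem lapPinv_mul_allOnes (hp : p ≠ 0) : lapPinv p * allOnes _ = 0 := by
  have hp' : (p : ℝ) ≠ 0 := Nat.cast_ne_zero.mpr hp
  simp only [lapPinv, pairConstProj, pairAntisymProj, add_mul, sub_mul, Matrix.smul_mul,
    pairOnes_mul_allOnes, allOnes_mul_allOnes, Fintype.card_prod, Fintype.card_fin, smul_smul,
    one_mul]
  match_scalars
  field_simp
  ring

theorem lapPinv_apply_self (i : Fin p × Fin 2) :
    lapPinv p i i = (2 * (p : ℝ))⁻¹ * (2⁻¹ - (2 * (p : ℝ))⁻¹) + (2 * (p : ℝ) - 2)⁻¹ * 2⁻¹ := by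
  simp only [lapPinv, pairConstProj, pairAntisymProj, pairOnes, Matrix.add_apply,
    Matrix.sub_apply, Matrix.smul_apply, one_apply_eq, of_apply, allOnes_apply, if_true, smul_eq_mul]
  ring

end CocktailParty

open CocktailParty in
theorem cocktailParty_resistanceRegular (p : ℕ) (hp : 2 ≤ p)
    (W : Matrix (Fin p × Fin 2) (Fin p × Fin 2) ℝ)
    (hW : IsMoorePenrose ((cocktailParty p).lapMatrix ℝ) W) :
    (∀ i, W i i =
        ((2 * (p : ℝ)) ^ 2 * (2 * (p : ℝ) - 3) + 4 * (2 * (p : ℝ) - 1) -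
            2 * (p : ℝ) * (2 * (p : ℝ) - 2)) /
          (2 * (2 * (p : ℝ)) ^ 2 * (2 * (p : ℝ) - 2) * ((p : ℝ) - 1))) ∧
    (∀ i j : Fin p × Fin 2,
      ∑ k, (W i i + W k k - 2 * W i k) = ∑ k, (W j j + W k k - 2 * W j k)) := by
  have hp0 : p ≠ 0 := by omega
  have hp' : (2 : ℝ) ≤ p := by exact_mod_cast hp
  obtain rfl : W = lapPinv p := hW.unique (isMoorePenrose_lapPinv hp0)
  refine ⟨fun i => ?_, fun i j => ?_⟩
  · rw [lapPinv_apply_self]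
    field_simp [show (p : ℝ) - 1 ≠ 0 by linarith, show 2 * (p : ℝ) - 2 ≠ 0 by linarith]
    ring
  · rw [sum_resistance_eq_of_diag_eq _ lapPinv_apply_self (lapPinv_mul_allOnes hp0),
      sum_resistance_eq_of_diag_eq _ lapPinv_apply_self (lapPinv_mul_allOnes hp0)]
end

section
/- For a connected graph G on n ≥ 2 vertices, ρ_1(G) ≥ min_{i≠j} sqrt( R̄_i R̄_j ), where R̄_i = T_i/R_i; equality holds if and only if G is pseudo resistance regular. -/
open Matrix BigOperators Finset

/-- Resistance degree `R_i`. -/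
noncomputable def rdeg {V : Type*} [Fintype V] [DecidableEq V]
    (G : SimpleGraph V) [DecidableRel G.Adj] (i : V) : ℝ :=
  ∑ j, resistMatrix G i j

/-- Second resistance degree `T_i`. -/
noncomputable def rdeg2 {V : Type*} [Fintype V] [DecidableEq V]
    (G : SimpleGraph V) [DecidableRel G.Adj] (i : V) : ℝ :=
  ∑ j, resistMatrix G i j * rdeg G j

/-!
Let `v` be a positive Perron eigenvector of the resistance matrix `R` for `ρ = ρ₁(G)` and `D` the
diagonal matrix of resistance degrees. Then `B = D⁻¹ R D` has row sums `R̄ᵢ` and the positive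
eigenvector `w = D⁻¹ v`. If `w i` is the smallest and `w j` the second smallest entry of `w`, the
eigenvalue equations at `i` and `j`, together with `r_ii = 0`, give `ρ w i ≥ R̄ᵢ w j` and
`ρ w j ≥ R̄ⱼ w i`, hence `ρ² ≥ R̄ᵢ R̄ⱼ`. In case of equality both estimates are tight, which forces
`w` to be constant when `n ≥ 3` because all off-diagonal entries are positive, and then every `R̄ₖ`
equals `ρ`; for `n = 2` all `R̄ₖ` agree anyway. Conversely, if all `R̄ₖ` equal `s`, the eigenvalue
equation at the largest entry of `w` gives `ρ ≤ s`.
-/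

variable {ι : Type*}

theorem exists_ne_forall_le_forall_ne_le [Finite ι] [Nontrivial ι] {α : Type*} [LinearOrder α]
    (f : ι → α) : ∃ i j, i ≠ j ∧ (∀ k, f i ≤ f k) ∧ ∀ k ≠ i, f j ≤ f k := by
  obtain ⟨i, hi⟩ := Finite.exists_min f
  have : Nonempty {k // k ≠ i} := nonempty_subtype.2 (exists_ne i)
  obtain ⟨⟨j, hji⟩, hj⟩ := Finite.exists_min fun k : {k // k ≠ i} => f k
  exact ⟨i, j, hji.symm, hi, fun k hk => hj ⟨k, hk⟩⟩

namespace Matrix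

section Perron

variable [Fintype ι] {A : Matrix ι ι ℝ} {ρ : ℝ}

open scoped MatrixOrder in
theorem IsHermitian.posSemidef_smul_one_sub [DecidableEq ι] (hA : A.IsHermitian)
    (h : ∀ i, hA.eigenvalues i ≤ ρ) : (ρ • 1 - A).PosSemidef := by
  have hle : A ≤ algebraMap ℝ _ ρ := le_algebraMap_of_spectrum_le (by
    rw [hA.spectrum_real_eq_range_eigenvalues]
    rintro _ ⟨i, rfl⟩
    exact h i) hA
  simpa [le_iff, Algebra.algebraMap_eq_smul_one] using hle

theorem mulVec_eq_smul_of_le_dotProduct_mulVec [DecidableEq ι] (hA : (ρ • 1 - A).PosSemidef)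
    {x : ι → ℝ} (hx : ρ * (x ⬝ᵥ x) ≤ x ⬝ᵥ (A *ᵥ x)) : A *ᵥ x = ρ • x := by
  have hquad : x ⬝ᵥ ((ρ • 1 - A) *ᵥ x) = ρ * (x ⬝ᵥ x) - x ⬝ᵥ (A *ᵥ x) := by
    rw [sub_mulVec, dotProduct_sub, smul_mulVec, one_mulVec, dotProduct_smul, smul_eq_mul]
  have hker : (ρ • 1 - A) *ᵥ x = 0 := by
    rw [← hA.dotProduct_mulVec_zero_iff, star_trivial]
    exact le_antisymm (hquad ▸ by linarith) (by simpa using hA.dotProduct_mulVec_nonneg x)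
  rw [sub_mulVec, smul_mulVec, one_mulVec, sub_eq_zero] at hker
  exact hker.symm

theorem dotProduct_mulVec_le_abs (hA : ∀ i j, 0 ≤ A i j) (u : ι → ℝ) :
    u ⬝ᵥ (A *ᵥ u) ≤ |u| ⬝ᵥ (A *ᵥ |u|) := by
  simp only [dotProduct, mulVec, mul_sum, Pi.abs_apply]
  refine sum_le_sum fun i _ => sum_le_sum fun j _ => ?_
  calc u i * (A i j * u j) ≤ |u i * (A i j * u j)| := le_abs_self _
    _ = |u i| * (A i j * |u j|) := by rw [abs_mul, abs_mul, abs_of_nonneg (hA i j)]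

/-- Perron–Frobenius for symmetric nonnegative matrices: the absolute value of a top
eigenvector has Rayleigh quotient at least `ρ`, hence is itself a top eigenvector. -/
theorem IsHermitian.exists_nonneg_eigenvector_of_isGreatest [DecidableEq ι] (hA : A.IsHermitian)
    (hA₀ : ∀ i j, 0 ≤ A i j) (hρ : IsGreatest (Set.range hA.eigenvalues) ρ) :
    ∃ v : ι → ℝ, v ≠ 0 ∧ 0 ≤ v ∧ A *ᵥ v = ρ • v := by
  obtain ⟨k, hk⟩ := hρ.1
  set u : ι → ℝ := (hA.eigenvectorBasis k).ofLp
  have hu : A *ᵥ u = ρ • u := by rw [hA.mulVec_eigenvectorBasis, hk]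
  have hu₀ : u ≠ 0 := (WithLp.ofLp_eq_zero 2).not.2 (hA.eigenvectorBasis.orthonormal.ne_zero k)
  refine ⟨|u|, fun h => hu₀ (funext fun i => abs_eq_zero.1 (congrFun h i)), abs_nonneg u,
    mulVec_eq_smul_of_le_dotProduct_mulVec (hA.posSemidef_smul_one_sub fun i => hρ.2 ⟨i, rfl⟩) ?_⟩
  have hnorm : |u| ⬝ᵥ |u| = u ⬝ᵥ u := by simp only [dotProduct, Pi.abs_apply, abs_mul_abs_self]
  calc ρ * (|u| ⬝ᵥ |u|) = u ⬝ᵥ (A *ᵥ u) := by rw [hnorm, hu, dotProduct_smul, smul_eq_mul]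
    _ ≤ |u| ⬝ᵥ (A *ᵥ |u|) := dotProduct_mulVec_le_abs hA₀ u

theorem pos_of_mulVec_eq_smul (hoff : ∀ i j, i ≠ j → 0 < A i j) {v : ι → ℝ} (hv₀ : 0 ≤ v)
    (hv : v ≠ 0) (hAv : A *ᵥ v = ρ • v) (i : ι) : 0 < v i := by
  refine (hv₀ i).lt_of_ne' fun hvi => hv (funext fun j => ?_)
  obtain rfl | hji := eq_or_ne j i
  · exact hvi
  have hrow : ∑ k, A i k * v k = 0 := by simpa [mulVec, dotProduct, hvi] using congrFun hAv i
  have hterm : ∀ k ∈ univ, 0 ≤ A i k * v k := fun k _ => by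
    obtain rfl | hki := eq_or_ne k i
    · simp [hvi]
    · exact mul_nonneg (hoff i k hki.symm).le (hv₀ k)
  have := (sum_eq_zero_iff_of_nonneg hterm).1 hrow j (mem_univ j)
  exact (mul_eq_zero.1 this).resolve_left (hoff i j hji.symm).ne'

theorem IsHermitian.exists_pos_eigenvector_of_isGreatest [DecidableEq ι] (hA : A.IsHermitian)
    (hA₀ : ∀ i j, 0 ≤ A i j) (hoff : ∀ i j, i ≠ j → 0 < A i j)
    (hρ : IsGreatest (Set.range hA.eigenvalues) ρ) :
    ∃ v : ι → ℝ, (∀ i, 0 < v i) ∧ A *ᵥ v = ρ • v := by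
  obtain ⟨v, hv, hv₀, hAv⟩ := hA.exists_nonneg_eigenvector_of_isGreatest hA₀ hρ
  exact ⟨v, pos_of_mulVec_eq_smul hoff hv₀ hv hAv, hAv⟩

end Perron

section RowSum

variable {B : Matrix ι ι ℝ} {w : ι → ℝ} {ρ : ℝ}

theorem mul_sub_nonneg_of_forall_ne_le (hB : ∀ i j, 0 ≤ B i j) {i : ι} (hdiag : B i i = 0)
    {c : ℝ} (hc : ∀ k ≠ i, c ≤ w k) (j : ι) : 0 ≤ B i j * (w j - c) := by
  obtain rfl | hj := eq_or_ne j i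
  · simp [hdiag]
  · exact mul_nonneg (hB i j) (sub_nonneg.2 (hc j hj))

variable [Fintype ι]

theorem sum_mul_sub_eq_of_mulVec_eq_smul (hw : B *ᵥ w = ρ • w) (i : ι) (c : ℝ) :
    ∑ j, B i j * (w j - c) = ρ * w i - (∑ j, B i j) * c := by
  have hi : ∑ j, B i j * w j = ρ * w i := by simpa [mulVec, dotProduct] using congrFun hw i
  simp only [mul_sub, sum_sub_distrib, ← sum_mul, hi]

theorem rowSum_mul_le_of_forall_ne_le (hB : ∀ i j, 0 ≤ B i j) (hw : B *ᵥ w = ρ • w) {i : ι}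
    (hdiag : B i i = 0) {c : ℝ} (hc : ∀ k ≠ i, c ≤ w k) : (∑ j, B i j) * c ≤ ρ * w i := by
  rw [← sub_nonneg, ← sum_mul_sub_eq_of_mulVec_eq_smul hw]
  exact sum_nonneg fun j _ => mul_sub_nonneg_of_forall_ne_le hB hdiag hc j

theorem eq_of_rowSum_mul_eq (hB : ∀ i j, 0 ≤ B i j) (hw : B *ᵥ w = ρ • w) {i : ι}
    (hdiag : B i i = 0) {c : ℝ} (hc : ∀ k ≠ i, c ≤ w k) (heq : (∑ j, B i j) * c = ρ * w i)
    {k : ι} (hBk : 0 < B i k) : w k = c := by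
  have hsum : ∑ j, B i j * (w j - c) = 0 := by
    rw [sum_mul_sub_eq_of_mulVec_eq_smul hw, heq, sub_self]
  have hk := (sum_eq_zero_iff_of_nonneg fun j _ =>
    mul_sub_nonneg_of_forall_ne_le hB hdiag hc j).1 hsum k (mem_univ k)
  exact sub_eq_zero.1 ((mul_eq_zero.1 hk).resolve_left hBk.ne')

theorem le_rowSum_of_forall_le (hB : ∀ i j, 0 ≤ B i j) (hw : B *ᵥ w = ρ • w) {i : ι}
    (hwi : 0 < w i) (hmax : ∀ k, w k ≤ w i) : ρ ≤ ∑ j, B i j := by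
  have hsum : ρ * w i - (∑ j, B i j) * w i ≤ 0 := by
    rw [← sum_mul_sub_eq_of_mulVec_eq_smul hw]
    exact sum_nonpos fun j _ =>
      mul_nonpos_of_nonneg_of_nonpos (hB i j) (sub_nonpos.2 (hmax j))
  exact le_of_mul_le_mul_right (sub_nonpos.1 hsum) hwi

theorem rowSum_eq_of_forall_eq (hw : B *ᵥ w = ρ • w) {i : ι} (hwi : w i ≠ 0)
    (hconst : ∀ k, w k = w i) : ∑ j, B i j = ρ := by
  have hsum : ∑ j, B i j * (w j - w i) = 0 :=
    sum_eq_zero fun j _ => by rw [hconst j, sub_self, mul_zero]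
  rw [sum_mul_sub_eq_of_mulVec_eq_smul hw, sub_eq_zero] at hsum
  exact mul_right_cancel₀ hwi hsum.symm

theorem sqrt_rowSum_mul_rowSum_le (hB : ∀ i j, 0 ≤ B i j) (hw : B *ᵥ w = ρ • w)
    (hdiag : ∀ i, B i i = 0) (hwpos : ∀ i, 0 < w i) {i j : ι} (hi : ∀ k, w i ≤ w k)
    (hj : ∀ k ≠ i, w j ≤ w k) : √((∑ k, B i k) * ∑ k, B j k) ≤ ρ := by
  have h₁ := rowSum_mul_le_of_forall_ne_le hB hw (hdiag i) hj
  have h₂ := rowSum_mul_le_of_forall_ne_le hB hw (hdiag j) (fun k _ => hi k)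
  have hsi : 0 ≤ ∑ k, B i k := sum_nonneg fun k _ => hB i k
  have hsj : 0 ≤ ∑ k, B j k := sum_nonneg fun k _ => hB j k
  have hρ : 0 ≤ ρ :=
    nonneg_of_mul_nonneg_left ((mul_nonneg hsi (hwpos j).le).trans h₁) (hwpos i)
  have hprod := mul_le_mul h₁ h₂ (mul_nonneg hsj (hwpos i).le) (mul_nonneg hρ (hwpos i).le)
  rw [Real.sqrt_le_left hρ]
  refine le_of_mul_le_mul_right ?_ (mul_pos (hwpos i) (hwpos j))
  linarith

theorem forall_eq_of_sq_le_rowSum_mul_rowSum (hB : ∀ i j, 0 ≤ B i j) (hw : B *ᵥ w = ρ • w)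
    (hdiag : ∀ i, B i i = 0) (hoff : ∀ i j, i ≠ j → 0 < B i j) (hwpos : ∀ i, 0 < w i) {i j : ι}
    (hij : i ≠ j) (hi : ∀ k, w i ≤ w k) (hj : ∀ k ≠ i, w j ≤ w k)
    (h : ρ ^ 2 ≤ (∑ k, B i k) * ∑ k, B j k) :
    (∀ k ≠ i, w k = w j) ∧ ∀ k ≠ j, w k = w i := by
  have h₁ := rowSum_mul_le_of_forall_ne_le hB hw (hdiag i) hj
  have h₂ := rowSum_mul_le_of_forall_ne_le hB hw (hdiag j) (fun k _ => hi k)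
  have hsi : 0 < ∑ k, B i k :=
    sum_pos' (fun k _ => hB i k) ⟨j, mem_univ j, hoff i j hij⟩
  have hρ : 0 < ρ := pos_of_mul_pos_left ((mul_pos hsi (hwpos j)).trans_le h₁) (hwpos i).le
  have hprod : (∑ k, B i k) * w j * ((∑ k, B j k) * w i) = ρ * w i * (ρ * w j) := by
    refine le_antisymm (mul_le_mul h₁ h₂ ?_ (mul_pos hρ (hwpos i)).le) ?_
    · exact mul_nonneg (sum_nonneg fun k _ => hB j k) (hwpos i).le
    have := mul_le_mul_of_nonneg_right h (mul_pos (hwpos i) (hwpos j)).le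
    linarith
  obtain ⟨e₁, e₂⟩ := (mul_eq_mul_iff_eq_and_eq_of_pos h₁ h₂ (mul_pos hsi (hwpos j))
    (mul_pos hρ (hwpos j))).1 hprod
  exact ⟨fun k hk => eq_of_rowSum_mul_eq hB hw (hdiag i) hj e₁ (hoff i k hk.symm),
    fun k hk => eq_of_rowSum_mul_eq hB hw (hdiag j) (fun k _ => hi k) e₂ (hoff j k hk.symm)⟩

theorem rowSum_eq_of_forall_le_sqrt (hB : ∀ i j, 0 ≤ B i j) (hw : B *ᵥ w = ρ • w)
    (hdiag : ∀ i, B i i = 0) (hoff : ∀ i j, i ≠ j → 0 < B i j) (hwpos : ∀ i, 0 < w i)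
    (h3 : 2 < Fintype.card ι) (h : ∀ i j, i ≠ j → ρ ≤ √((∑ k, B i k) * ∑ k, B j k)) (l : ι) :
    ∑ k, B l k = ρ := by
  classical
  have : Nontrivial ι := Fintype.one_lt_card_iff_nontrivial.1 (by omega)
  obtain ⟨i, j, hij, hi, hj⟩ := exists_ne_forall_le_forall_ne_le w
  have hρ : 0 ≤ ρ :=
    (Real.sqrt_nonneg _).trans (sqrt_rowSum_mul_rowSum_le hB hw hdiag hwpos hi hj)
  have hs : 0 ≤ (∑ k, B i k) * ∑ k, B j k :=
    mul_nonneg (sum_nonneg fun k _ => hB i k) (sum_nonneg fun k _ => hB j k)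
  obtain ⟨hwi, hwj⟩ := forall_eq_of_sq_le_rowSum_mul_rowSum hB hw hdiag hoff hwpos hij hi hj
    ((Real.le_sqrt hρ hs).1 (h i j hij))
  obtain ⟨k, hk, hkj⟩ := (univ.erase i).exists_mem_ne
    (by rw [card_erase_of_mem (mem_univ i), card_univ]; omega) j
  have hij' : w i = w j := (hwj k hkj).symm.trans (hwi k (ne_of_mem_erase hk))
  have hconst : ∀ k, w k = w j := fun k => by
    obtain rfl | hki := eq_or_ne k i
    exacts [hij', hwi k hki]
  exact rowSum_eq_of_forall_eq hw (hwpos l).ne' fun k => (hconst k).trans (hconst l).symm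

end RowSum

section Similarity

variable [Fintype ι] [DecidableEq ι] {A : Matrix ι ι ℝ} {d : ι → ℝ}

theorem diagonal_inv_mul_mul_diagonal_apply (i j : ι) :
    (diagonal d⁻¹ * A * diagonal d) i j = A i j * d j / d i := by
  simp only [mul_diagonal, diagonal_mul, Pi.inv_apply]
  ring

theorem sum_diagonal_inv_mul_mul_diagonal_apply (i : ι) :
    ∑ j, (diagonal d⁻¹ * A * diagonal d) i j = (A *ᵥ d) i / d i := by
  simp only [diagonal_inv_mul_mul_diagonal_apply, ← sum_div]
  rfl

theorem diagonal_inv_mul_mul_diagonal_mulVec (hd : ∀ i, d i ≠ 0) {v : ι → ℝ} {ρ : ℝ}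
    (hv : A *ᵥ v = ρ • v) :
    (diagonal d⁻¹ * A * diagonal d) *ᵥ (d⁻¹ * v) = ρ • (d⁻¹ * v) := by
  have hdv : diagonal d *ᵥ (d⁻¹ * v) = v := funext fun i => by simp [mulVec_diagonal, hd i]
  rw [← mulVec_mulVec, ← mulVec_mulVec, hdv, hv, mulVec_smul]
  congr 1
  exact funext fun i => mulVec_diagonal _ _ i

end Similarity

section AvgRowSum

variable [Fintype ι] {A : Matrix ι ι ℝ}

noncomputable def avgRowSum (A : Matrix ι ι ℝ) (i : ι) : ℝ :=
  (∑ j, A i j * ∑ k, A j k) / ∑ j, A i j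

theorem IsSymm.avgRowSum_eq_of_card_eq_two (hA : A.IsSymm) (hdiag : ∀ i, A i i = 0)
    (hcard : Fintype.card ι = 2) (i j : ι) : A.avgRowSum i = A.avgRowSum j := by
  classical
  obtain rfl | hij := eq_or_ne i j
  · rfl
  have huniv : (univ : Finset ι) = {i, j} :=
    (eq_univ_of_card _ (by rw [card_pair hij, hcard])).symm
  simp only [avgRowSum, huniv, sum_pair hij, hdiag, hA.apply i j, zero_mul, zero_add,
    add_zero]

/-- The witness is `D⁻¹ A D` for `D` the diagonal matrix of row sums of `A`, together with
`D⁻¹ v` for a positive Perron eigenvector `v` of `A`. -/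
theorem IsHermitian.exists_rowSum_eq_avgRowSum [DecidableEq ι] [Nontrivial ι]
    (hA : A.IsHermitian) (hdiag : ∀ i, A i i = 0) (hoff : ∀ i j, i ≠ j → 0 < A i j) {ρ : ℝ}
    (hρ : IsGreatest (Set.range hA.eigenvalues) ρ) :
    ∃ (B : Matrix ι ι ℝ) (w : ι → ℝ), (∀ i j, 0 ≤ B i j) ∧ (∀ i, B i i = 0) ∧
      (∀ i j, i ≠ j → 0 < B i j) ∧ (∀ i, 0 < w i) ∧ B *ᵥ w = ρ • w ∧
      ∀ i, ∑ j, B i j = A.avgRowSum i := by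
  have hA₀ : ∀ i j, 0 ≤ A i j := fun i j => by
    obtain rfl | hij := eq_or_ne i j
    exacts [(hdiag i).ge, (hoff i j hij).le]
  set d : ι → ℝ := fun i => ∑ j, A i j
  have hd : ∀ i, 0 < d i := fun i =>
    have ⟨j, hj⟩ := exists_ne i
    sum_pos' (fun j _ => hA₀ i j) ⟨j, mem_univ j, hoff i j hj.symm⟩
  obtain ⟨v, hv, hAv⟩ := hA.exists_pos_eigenvector_of_isGreatest hA₀ hoff hρ
  refine ⟨diagonal d⁻¹ * A * diagonal d, d⁻¹ * v, fun i j => ?_, fun i => ?_, fun i j hij => ?_,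
    fun i => mul_pos (inv_pos.2 (hd i)) (hv i),
    diagonal_inv_mul_mul_diagonal_mulVec (fun i => (hd i).ne') hAv,
    sum_diagonal_inv_mul_mul_diagonal_apply⟩ <;> rw [diagonal_inv_mul_mul_diagonal_apply]
  · exact div_nonneg (mul_nonneg (hA₀ i j) (hd j).le) (hd i).le
  · rw [hdiag, zero_mul, zero_div]
  · exact div_pos (mul_pos (hoff i j hij) (hd j)) (hd i)

theorem IsHermitian.le_and_eq_iff_of_isLeast_sqrt_avgRowSum_mul [DecidableEq ι]
    (hA : A.IsHermitian) (hdiag : ∀ i, A i i = 0) (hoff : ∀ i j, i ≠ j → 0 < A i j) {ρ : ℝ}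
    (hρ : IsGreatest (Set.range hA.eigenvalues) ρ) {m : ℝ}
    (hm : IsLeast {x : ℝ | ∃ i j : ι, i ≠ j ∧ x = √(A.avgRowSum i * A.avgRowSum j)} m) :
    m ≤ ρ ∧ (ρ = m ↔ ∀ i j, A.avgRowSum i = A.avgRowSum j) := by
  obtain ⟨i₀, j₀, hij₀, -⟩ := hm.1
  have : Nontrivial ι := ⟨⟨i₀, j₀, hij₀⟩⟩
  obtain ⟨B, w, hB, hBdiag, hBoff, hw, hBw, hs⟩ := hA.exists_rowSum_eq_avgRowSum hdiag hoff hρ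
  simp only [← hs] at hm ⊢
  obtain ⟨i, j, hij, hi, hj⟩ := exists_ne_forall_le_forall_ne_le w
  have hmρ : m ≤ ρ :=
    (hm.2 ⟨i, j, hij, rfl⟩).trans (sqrt_rowSum_mul_rowSum_le hB hBw hBdiag hw hi hj)
  refine ⟨hmρ, fun hρm => ?_, fun hall => ?_⟩
  · rcases Nat.lt_or_ge 2 (Fintype.card ι) with h3 | h2
    · have hρs := rowSum_eq_of_forall_le_sqrt hB hBw hBdiag hBoff hw h3 fun i j hij =>
        hρm ▸ hm.2 ⟨i, j, hij, rfl⟩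
      exact fun i j => by rw [hρs, hρs]
    · simp only [hs]
      exact (isHermitian_iff_isSymm.1 hA).avgRowSum_eq_of_card_eq_two hdiag
        (le_antisymm h2 Fintype.one_lt_card)
  · obtain ⟨i₁, hi₁⟩ := Finite.exists_max w
    have hρs := le_rowSum_of_forall_le hB hBw (hw i₁) hi₁
    obtain ⟨i', j', -, rfl⟩ := hm.1
    have hρ : 0 ≤ ρ := (Real.sqrt_nonneg _).trans hmρ
    rw [hall i' i₁, hall j' i₁, Real.sqrt_mul_self (hρ.trans hρs)] at hmρ ⊢
    exact le_antisymm hρs hmρ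

end AvgRowSum

theorem PosDef.add_sub_two_mul_pos [Fintype ι] [DecidableEq ι] {X : Matrix ι ι ℝ} (hX : X.PosDef)
    {i j : ι} (hij : i ≠ j) : 0 < X i i + X j j - 2 * X i j := by
  set e : ι → ℝ := Pi.single i 1 - Pi.single j 1
  have he : e ≠ 0 := fun h => by simpa [e, hij] using congrFun h i
  have hsym : X j i = X i j := by simpa using hX.isHermitian.apply i j
  have hq : star e ⬝ᵥ (X *ᵥ e) = X i i + X j j - 2 * X i j := by
    simp only [e, star_trivial, mulVec_sub, sub_dotProduct, single_dotProduct, mulVec_single_one,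
      col_apply, Pi.sub_apply, hsym]
    ring
  exact hq ▸ hX.dotProduct_mulVec_pos he

end Matrix

theorem dotProduct_allOnes_mulVec {V : Type*} [Fintype V] (x : V → ℝ) :
    x ⬝ᵥ (allOnes V *ᵥ x) = (∑ i, x i) ^ 2 := by
  simp [dotProduct, mulVec, allOnes, sum_mul, sq]

variable {V : Type*} [Fintype V] [DecidableEq V] {G : SimpleGraph V} [DecidableRel G.Adj]

theorem SimpleGraph.Connected.posDef_lapMatrix_add_smul_allOnes (hG : G.Connected) :
    (G.lapMatrix ℝ + (Fintype.card V : ℝ)⁻¹ • allOnes V).PosDef := by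
  have : Nonempty V := hG.nonempty
  have hL := G.posSemidef_lapMatrix ℝ
  have hJ : ((Fintype.card V : ℝ)⁻¹ • allOnes V).IsHermitian := by
    ext i j
    simp [allOnes]
  refine posDef_iff_dotProduct_mulVec.2 ⟨hL.isHermitian.add hJ, fun x hx => ?_⟩
  rw [star_trivial, add_mulVec, dotProduct_add, smul_mulVec, dotProduct_smul, smul_eq_mul,
    dotProduct_allOnes_mulVec]
  have hLx : 0 ≤ x ⬝ᵥ (G.lapMatrix ℝ *ᵥ x) := by simpa using hL.dotProduct_mulVec_nonneg x
  rcases hLx.lt_or_eq with hLx | hLx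
  · positivity
  have hconst : ∀ i j, x i = x j := by
    have hker := (hL.dotProduct_mulVec_zero_iff x).1 (by rw [star_trivial, hLx])
    exact fun i j => G.lapMatrix_mulVec_eq_zero_iff_forall_reachable.1 hker i j (hG.preconnected i j)
  obtain ⟨i, hi⟩ : ∃ i, x i ≠ 0 := by
    by_contra! h
    exact hx (funext h)
  have hsum : ∑ j, x j = Fintype.card V * x i := by
    simp [hconst _ i]
  rw [← hLx, hsum]
  positivity

theorem resistMatrix_apply_self (i : V) : resistMatrix G i i = 0 := by
  simp only [resistMatrix, of_apply]
  ring

theorem resistMatrix_pos (hG : G.Connected) {i j : V} (hij : i ≠ j) : 0 < resistMatrix G i j :=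
  hG.posDef_lapMatrix_add_smul_allOnes.inv.add_sub_two_mul_pos hij

theorem resistance_spectral_radius_lower_bound_avg_general
    (n : ℕ) (G : SimpleGraph (Fin n)) [DecidableRel G.Adj]
    (hG : G.Connected) (hR : (resistMatrix G).IsHermitian)
    (ρ : ℝ) (hρ : IsGreatest (Set.range hR.eigenvalues) ρ)
    (m : ℝ) (hm : IsLeast
      {x : ℝ | ∃ i j : Fin n, i ≠ j ∧
        x = Real.sqrt ((rdeg2 G i / rdeg G i) * (rdeg2 G j / rdeg G j))} m) :
    m ≤ ρ ∧ (ρ = m ↔ ∀ i j : Fin n, rdeg2 G i / rdeg G i = rdeg2 G j / rdeg G j) :=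
  hR.le_and_eq_iff_of_isLeast_sqrt_avgRowSum_mul resistMatrix_apply_self
    (fun _ _ => resistMatrix_pos hG) hρ hm

theorem resistance_spectral_radius_lower_bound_avg
    (n : ℕ) (hn : 2 ≤ n) (G : SimpleGraph (Fin n)) [DecidableRel G.Adj]
    (hG : G.Connected) (hR : (resistMatrix G).IsHermitian)
    (ρ : ℝ) (hρ : IsGreatest (Set.range hR.eigenvalues) ρ)
    (m : ℝ) (hm : IsLeast
      {x : ℝ | ∃ i j : Fin n, i ≠ j ∧
        x = Real.sqrt ((rdeg2 G i / rdeg G i) * (rdeg2 G j / rdeg G j))} m) :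
    m ≤ ρ ∧ (ρ = m ↔ ∀ i j : Fin n, rdeg2 G i / rdeg G i = rdeg2 G j / rdeg G j) :=
  resistance_spectral_radius_lower_bound_avg_general n G hG hR ρ hρ m hm
end
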